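/- Let w be an element of S_Z, let A be a subset of Inv(w), and let n be a positive integer. Then the set RF^+_n(w,A) of decreasing primed reduced factorizations of w into at most n factors with marked-inversion set A is nonempty if and only if c_i(w^{-1}) <= n for every integer i, where c_i(v) := |{ j in Z : i < j and v(i) > v(j) }| is the Lehmer code of v. -/

import Mathlib

open MvPolynomial

/-! ### Permutations of ℤ, reduced words -/

/-- The simple transposition `s_i = (i, i+1)` of `ℤ`. -/
def sT (i : ℤ) : Equiv.Perm ℤ := Equiv.swap i (i + 1)

/-- The product `s_{i_1} s_{i_2} ⋯ s_{i_l}` of the simple transpositions indexed by a word. -/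
def wordProd (l : List ℤ) : Equiv.Perm ℤ := (l.map sT).prod

/-- `S_ℤ`: the subgroup of permutations of `ℤ` generated by the simple transpositions. -/
def SZSet : Set (Equiv.Perm ℤ) := {w | ∃ l : List ℤ, wordProd l = w}

/-- `S_∞`: the subgroup generated by `s_i` for `i ≥ 1`. -/
def SinftySet : Set (Equiv.Perm ℤ) :=
  {w | ∃ l : List ℤ, (∀ i ∈ l, 1 ≤ i) ∧ wordProd l = w}

/-- `S_n`: the subgroup generated by `s_i` for `1 ≤ i ≤ n-1`. -/
def SnSet (n : ℕ) : Set (Equiv.Perm ℤ) :=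
  {w | ∃ l : List ℤ, (∀ i ∈ l, 1 ≤ i ∧ i < n) ∧ wordProd l = w}

/-- A reduced word for `w`: a minimal length word whose product is `w`. -/
def IsReducedWord (w : Equiv.Perm ℤ) (l : List ℤ) : Prop :=
  wordProd l = w ∧ ∀ m : List ℤ, wordProd m = w → l.length ≤ m.length

/-- The Coxeter length of `w` (the length of any reduced word for `w`). -/
noncomputable def lenOf (w : Equiv.Perm ℤ) : ℕ :=
  sInf {m | ∃ l : List ℤ, wordProd l = w ∧ l.length = m}

/-- The inversion set `Inv(w) = {(a,b) : a < b, w(a) > w(b)}`. -/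
def InvSet (w : Equiv.Perm ℤ) : Set (ℤ × ℤ) := {p | p.1 < p.2 ∧ w p.2 < w p.1}

/-- The Lehmer code `c_i(w) = #{j : i < j, w(i) > w(j)}`. -/
noncomputable def codeOf (w : Equiv.Perm ℤ) (i : ℤ) : ℕ := {j : ℤ | i < j ∧ w j < w i}.ncard

/-- The Rothe diagram `D(w) = {(i, w(j)) : i < j, w(i) > w(j)}`. -/
def RotheD (w : Equiv.Perm ℤ) : Set (ℤ × ℤ) :=
  {p | ∃ j : ℤ, p.1 < j ∧ w j < w p.1 ∧ p.2 = w j}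

/-! ### Primed letters and primed words -/

/-- A primed letter: `(x, false)` denotes the integer `x`, `(x, true)` denotes `x' = x - 1/2`. -/
abbrev PLetter := ℤ × Bool

/-- Twice the value of a primed letter (so that comparisons agree with `1' < 1 < 2' < 2 < ⋯`). -/
def pval (p : PLetter) : ℤ := 2 * p.1 - (if p.2 then 1 else 0)

/-- A strictly decreasing primed word. -/
def PDec (l : List PLetter) : Prop := l.Pairwise (fun p q => pval q < pval p)

/-- A strictly decreasing integer word. -/
def ZDec (l : List ℤ) : Prop := l.Pairwise (fun x y => y < x)

/-- Remove the primes from a primed word (the "ceiling"). -/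
def unprimeW (l : List PLetter) : List ℤ := l.map Prod.fst

/-- Membership in `R⁺(w)`: a primed word whose unprimed form is a reduced word for `w`. -/
def IsPrimedReducedWord (w : Equiv.Perm ℤ) (l : List PLetter) : Prop :=
  IsReducedWord w (unprimeW l)

/-- The set `Marked(i)` of marked inversions of a primed word. -/
def markedSet (l : List PLetter) : Set (ℤ × ℤ) :=
  {p | ∃ j : Fin l.length, (l.get j).2 = true ∧
        p.1 = wordProd ((l.drop ((j : ℕ) + 1)).reverse.map Prod.fst) (l.get j).1 ∧
        p.2 = wordProd ((l.drop ((j : ℕ) + 1)).reverse.map Prod.fst) ((l.get j).1 + 1)}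

/-! ### Factorizations (as sequences of factors) -/

/-- The concatenation of the first `N` factors of a factorization. -/
def concatP (a : ℕ → List PLetter) (N : ℕ) : List PLetter := ((List.range N).map a).flatten

/-- The concatenation of the first `N` factors of an unprimed factorization. -/
def concatZ (a : ℕ → List ℤ) (N : ℕ) : List ℤ := ((List.range N).map a).flatten

/-- `RF⁺(w, A)`: decreasing primed reduced factorizations of `w` with marked set `A`
(all but finitely many factors empty). -/
def RFplus (w : Equiv.Perm ℤ) (A : Set (ℤ × ℤ)) : Set (ℕ → List PLetter) :=
  {a | (∀ i, PDec (a i)) ∧ ∃ N : ℕ, (∀ m, N ≤ m → a m = []) ∧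
        IsPrimedReducedWord w (concatP a N) ∧ markedSet (concatP a N) = A}

/-- `RF⁺_n(w, A)`: elements of `RF⁺(w, A)` with all factors beyond the first `n` empty. -/
def RFplusN (n : ℕ) (w : Equiv.Perm ℤ) (A : Set (ℤ × ℤ)) : Set (ℕ → List PLetter) :=
  {a | (∀ i, PDec (a i)) ∧ (∀ m, n ≤ m → a m = []) ∧
        IsPrimedReducedWord w (concatP a n) ∧ markedSet (concatP a n) = A}

/-- `RF_n(w)`: unprimed decreasing reduced factorizations of `w` into at most `n` factors. -/
def RFZn (n : ℕ) (w : Equiv.Perm ℤ) : Set (ℕ → List ℤ) :=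
  {a | (∀ i, ZDec (a i)) ∧ (∀ m, n ≤ m → a m = []) ∧ IsReducedWord w (concatZ a n)}

/-- Removing the primes from each factor of a primed factorization. -/
def unprimeF (a : ℕ → List PLetter) : ℕ → List ℤ := fun m => unprimeW (a m)

/-! ### The pairing procedure and crystal operators (primed version) -/

/-- Find the first letter `b` in the (decreasing) list with `⌈b⌉ < c`, removing it. -/
def findPairP (c : ℤ) : List PLetter → Option PLetter × List PLetter
  | [] => (none, [])
  | b :: rest =>
      if b.1 < c then (some b, rest)
      else
        let r := findPairP c rest
        (r.1, b :: r.2)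

/-- Iterate the pairing over the letters of `v` from right to left. -/
def pairFoldP (u : List PLetter) (vrev : List PLetter) :
    List (PLetter × PLetter) × List PLetter :=
  vrev.foldl (fun st c =>
    match findPairP c.1 st.2 with
    | (none, r) => (st.1, r)
    | (some b, r) => ((b, c) :: st.1, r)) ([], u)

/-- The set `pair(u, v)` of paired letters, as a list of pairs. -/
def pairsP (u v : List PLetter) : List (PLetter × PLetter) := (pairFoldP u v.reverse).1

/-- The unpaired letters of `v` (in decreasing order). -/
def unpairedSnd (u v : List PLetter) : List PLetter :=
  v.filter fun c => decide (c ∉ (pairsP u v).map Prod.snd)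

/-- The unpaired letters of `u` (in decreasing order). -/
def unpairedFst (u v : List PLetter) : List PLetter :=
  u.filter fun b => decide (b ∉ (pairsP u v).map Prod.fst)

theorem exists_add_not_mem (L : List ℤ) (x : ℤ) : ∃ q : ℕ, x + q ∉ L := by
  have h : ∃ q : ℕ, ∀ y ∈ L, y < x + q := by
    induction L with
    | nil => exact ⟨1, by simp⟩
    | cons a t ih =>
      obtain ⟨q, hq⟩ := ih
      refine ⟨q + (a - x).toNat + 1, ?_⟩
      intro y hy
      rcases List.mem_cons.mp hy with rfl | h
      · push_cast; omega
      · have := hq y h; push_cast; omega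
  obtain ⟨q, hq⟩ := h
  exact ⟨q, fun hmem => lt_irrefl _ (hq _ hmem)⟩

theorem exists_sub_not_mem (L : List ℤ) (x : ℤ) : ∃ q : ℕ, x - q ∉ L := by
  have h : ∃ q : ℕ, ∀ y ∈ L, x - q < y := by
    induction L with
    | nil => exact ⟨1, by simp⟩
    | cons a t ih =>
      obtain ⟨q, hq⟩ := ih
      refine ⟨q + (x - a).toNat + 1, ?_⟩
      intro y hy
      rcases List.mem_cons.mp hy with rfl | h
      · push_cast; omega
      · have := hq y h; push_cast; omega
  obtain ⟨q, hq⟩ := h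
  exact ⟨q, fun hmem => lt_irrefl _ (hq _ hmem)⟩

/-- The minimal `q ∈ ℕ` with `x + q ∉ L`. -/
def qUp (L : List ℤ) (x : ℤ) : ℕ := Nat.find (exists_add_not_mem L x)

/-- The minimal `q ∈ ℕ` with `x - q ∉ L`. -/
def qDown (L : List ℤ) (x : ℤ) : ℕ := Nat.find (exists_sub_not_mem L x)

/-- Reverse the prime on a primed letter. -/
def toggleP (p : PLetter) : PLetter := (p.1, !p.2)

/-- Toggle the prime on the occurrence of the letter `p` in a primed word. -/
def toggleIn (l : List PLetter) (p : PLetter) : List PLetter :=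
  l.map fun q => if q = p then toggleP q else q

/-- Swap the primes on a pair `(b, c)` with `b` in the first word and `c` in the second:
reverse both primes when exactly one of the two letters is primed. -/
def swapPairIn (uv : List PLetter × List PLetter) (bc : PLetter × PLetter) :
    List PLetter × List PLetter :=
  if bc.1.2 = bc.2.2 then uv else (toggleIn uv.1 bc.1, toggleIn uv.2 bc.2)

/-- Insert a letter into a decreasing primed word at the correct position. -/
def insertDecP (p : PLetter) : List PLetter → List PLetter
  | [] => [p]
  | q :: t => if pval q < pval p then p :: q :: t else q :: insertDecP p t

/-- The raising crystal operator acting on a consecutive pair of factors (primed version). -/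
def eStepP (u v : List PLetter) : Option (List PLetter × List PLetter) :=
  match unpairedSnd u v with
  | [] => none
  | x :: _ =>
    let q : ℕ := qUp (unprimeW u) x.1
    let toSwap := (pairsP u v).filter fun bc => decide (x.1 < bc.2.1 ∧ bc.2.1 ≤ x.1 + q)
    some (toSwap.foldl swapPairIn (insertDecP (x.1 + q, x.2) u, v.erase x))

/-- The lowering crystal operator acting on a consecutive pair of factors (primed version). -/
def fStepP (u v : List PLetter) : Option (List PLetter × List PLetter) :=
  match (unpairedFst u v).getLast? with
  | none => none
  | some y =>
    let q : ℕ := qDown (unprimeW v) y.1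
    let toSwap := (pairsP u v).filter fun bc => decide (y.1 - q ≤ bc.1.1 ∧ bc.1.1 < y.1)
    some (toSwap.foldl swapPairIn (u.erase y, insertDecP (y.1 - q, y.2) v))

/-- Apply a two-factor operator at position `(i, i+1)` of a factorization. -/
def applyAtP (g : List PLetter → List PLetter → Option (List PLetter × List PLetter))
    (i : ℕ) (a : ℕ → List PLetter) : Option (ℕ → List PLetter) :=
  (g (a i) (a (i + 1))).map fun uv =>
    Function.update (Function.update a i uv.1) (i + 1) uv.2

/-- The crystal operator `e` on primed factorizations acting on factors `i, i+1` (0-indexed). -/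
def eP (i : ℕ) (a : ℕ → List PLetter) : Option (ℕ → List PLetter) := applyAtP eStepP i a

/-- The crystal operator `f` on primed factorizations acting on factors `i, i+1` (0-indexed). -/
def fP (i : ℕ) (a : ℕ → List PLetter) : Option (ℕ → List PLetter) := applyAtP fStepP i a

/-! ### Crystal operators (unprimed version) -/

def findPairZ (c : ℤ) : List ℤ → Option ℤ × List ℤ
  | [] => (none, [])
  | b :: rest =>
      if b < c then (some b, rest)
      else
        let r := findPairZ c rest
        (r.1, b :: r.2)

def pairFoldZ (u : List ℤ) (vrev : List ℤ) : List (ℤ × ℤ) × List ℤ :=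
  vrev.foldl (fun st c =>
    match findPairZ c st.2 with
    | (none, r) => (st.1, r)
    | (some b, r) => ((b, c) :: st.1, r)) ([], u)

/-- The set `pair(u, v)` for integer words. -/
def pairsZ (u v : List ℤ) : List (ℤ × ℤ) := (pairFoldZ u v.reverse).1

def insertDecZ (x : ℤ) : List ℤ → List ℤ
  | [] => [x]
  | q :: t => if q < x then x :: q :: t else q :: insertDecZ x t

/-- The raising crystal operator on a consecutive pair of integer factors. -/
def eStepZ (u v : List ℤ) : Option (List ℤ × List ℤ) :=
  match v.filter (fun c => decide (c ∉ (pairsZ u v).map Prod.snd)) with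
  | [] => none
  | x :: _ =>
    let q : ℕ := qUp u x
    some (insertDecZ (x + q) u, v.erase x)

/-- The lowering crystal operator on a consecutive pair of integer factors. -/
def fStepZ (u v : List ℤ) : Option (List ℤ × List ℤ) :=
  match (u.filter (fun b => decide (b ∉ (pairsZ u v).map Prod.fst))).getLast? with
  | none => none
  | some y =>
    let q : ℕ := qDown v y
    some (u.erase y, insertDecZ (y - q) v)

def applyAtZ (g : List ℤ → List ℤ → Option (List ℤ × List ℤ))
    (i : ℕ) (a : ℕ → List ℤ) : Option (ℕ → List ℤ) :=
  (g (a i) (a (i + 1))).map fun uv =>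
    Function.update (Function.update a i uv.1) (i + 1) uv.2

/-- The crystal operator `e` acting on factors `i, i+1` (0-indexed) of an integer factorization,
so that `eZ i` is the paper's `e_{i+1}`. -/
def eZ (i : ℕ) (a : ℕ → List ℤ) : Option (ℕ → List ℤ) := applyAtZ eStepZ i a

/-- The crystal operator `f` acting on factors `i, i+1` (0-indexed). -/
def fZ (i : ℕ) (a : ℕ → List ℤ) : Option (ℕ → List ℤ) := applyAtZ fStepZ i a

/-! ### Coxeter–Knuth equivalence and tableaux -/

/-- One elementary Coxeter–Knuth move. -/
inductive CKStep : List ℤ → List ℤ → Prop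
  | acb (u v : List ℤ) {a b c : ℤ} (h1 : a < b) (h2 : b < c) :
      CKStep (u ++ a :: c :: b :: v) (u ++ c :: a :: b :: v)
  | bca (u v : List ℤ) {a b c : ℤ} (h1 : a < b) (h2 : b < c) :
      CKStep (u ++ b :: c :: a :: v) (u ++ b :: a :: c :: v)
  | braid (u v : List ℤ) {a b : ℤ} (h : b = a + 1 ∨ b = a - 1) :
      CKStep (u ++ a :: b :: a :: v) (u ++ b :: a :: b :: v)

/-- Coxeter–Knuth equivalence. -/
def CKEquiv : List ℤ → List ℤ → Prop := Relation.EqvGen CKStep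

/-- A tableau is recorded as its list of rows; its shape is the list of row lengths. -/
def shapeOf (T : List (List ℤ)) : List ℕ := T.map List.length

/-- The row reading word: rows left to right, starting with the last row. -/
def rowword (T : List (List ℤ)) : List ℤ := T.reverse.flatten

/-- The reverse row reading word. -/
def revrow (T : List (List ℤ)) : List ℤ := (rowword T).reverse

/-- The entry of `T` in row `i`, position `j` within the row (both 0-indexed). -/
def entryOf (T : List (List ℤ)) (i j : ℕ) : ℤ := (T.getD i []).getD j 0

/-- `T` has partition shape: rows nonempty with weakly decreasing lengths. -/
def IsPartShape (T : List (List ℤ)) : Prop :=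
  (∀ r ∈ T, r ≠ []) ∧ ∀ i, i + 1 < T.length → (T.getD (i + 1) []).length ≤ (T.getD i []).length

/-- An increasing tableau of partition shape. -/
def IncrTab (T : List (List ℤ)) : Prop :=
  IsPartShape T ∧ (∀ r ∈ T, r.Pairwise (· < ·)) ∧
  ∀ i j, i + 1 < T.length → j < (T.getD (i + 1) []).length → entryOf T i j < entryOf T (i + 1) j

/-- A decreasing tableau of partition shape. -/
def DecrTab (T : List (List ℤ)) : Prop :=
  IsPartShape T ∧ (∀ r ∈ T, r.Pairwise (fun x y => y < x)) ∧
  ∀ i j, i + 1 < T.length → j < (T.getD (i + 1) []).length → entryOf T (i + 1) j < entryOf T i j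

/-! ### Shifted tableaux -/

/-- Strict partition shape: rows nonempty with strictly decreasing lengths.  Row `i`
(0-indexed) of a shifted tableau occupies columns `i, i+1, …`. -/
def IsStrictShape (T : List (List ℤ)) : Prop :=
  (∀ r ∈ T, r ≠ []) ∧ ∀ i, i + 1 < T.length → (T.getD (i + 1) []).length < (T.getD i []).length

/-- An increasing shifted tableau: rows and columns strictly increase.  In row-list
coordinates, the entry of row `i+1` in within-row position `j` lies in the same column as the
entry of row `i` in within-row position `j+1`. -/
def ShIncrTab (T : List (List ℤ)) : Prop :=
  IsStrictShape T ∧ (∀ r ∈ T, r.Pairwise (· < ·)) ∧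
  ∀ i j, i + 1 < T.length → j < (T.getD (i + 1) []).length →
    entryOf T i (j + 1) < entryOf T (i + 1) j

/-- A decreasing shifted tableau. -/
def ShDecrTab (T : List (List ℤ)) : Prop :=
  IsStrictShape T ∧ (∀ r ∈ T, r.Pairwise (fun x y => y < x)) ∧
  ∀ i j, i + 1 < T.length → j < (T.getD (i + 1) []).length →
    entryOf T (i + 1) j < entryOf T i (j + 1)

/-! ### Young diagrams of partitions given as lists -/

/-- The Young diagram of a partition given as a list of row lengths (1-indexed positions). -/
def YDiagL (lam : List ℕ) : Set (ℤ × ℤ) :=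
  {p | 1 ≤ p.1 ∧ 1 ≤ p.2 ∧ p.2 ≤ (lam.getD (p.1 - 1).toNat 0 : ℤ)}

/-- The tableau `T_λ` with entry `i + j - 1` in each box `(i, j)` of `D_λ` (1-indexed). -/
def Tlam (lam : List ℕ) : List (List ℤ) :=
  lam.mapIdx fun i k => (List.range k).map fun j => ((i + j + 1 : ℕ) : ℤ)

/-! ### Fixed-point-free involutions -/

def fpfFun (i : ℤ) : ℤ := if Even i then i - 1 else i + 1

theorem fpfFun_involutive : Function.Involutive fpfFun := by
  intro i
  simp only [fpfFun, Int.even_iff]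
  split <;> split <;> omega

/-- The fixed-point-free involution `1_fpf : i ↦ i - (-1)^i`. -/
def onefpf : Equiv.Perm ℤ :=
  ⟨fpfFun, fpfFun, fpfFun_involutive, fpfFun_involutive⟩

/-- `I^fpf_ℤ`: the `S_ℤ`-conjugation orbit of `1_fpf`. -/
def IfpfZ : Set (Equiv.Perm ℤ) := {z | ∃ w ∈ SZSet, z = w⁻¹ * onefpf * w}

/-- `I^fpf_∞`: the `S_∞`-conjugation orbit of `1_fpf`. -/
def IfpfInfty : Set (Equiv.Perm ℤ) := {z | ∃ w ∈ SinftySet, z = w⁻¹ * onefpf * w}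

/-- `𝒜^Sp(z)`: minimal-length `w ∈ S_ℤ` with `z = w⁻¹ 1_fpf w`. -/
def ASp (z : Equiv.Perm ℤ) : Set (Equiv.Perm ℤ) :=
  {w | w ∈ SZSet ∧ z = w⁻¹ * onefpf * w ∧
       ∀ v ∈ SZSet, z = v⁻¹ * onefpf * v → lenOf w ≤ lenOf v}

/-- `R^Sp(z)`: the set of fpf-involution words for `z`. -/
def RSp (z : Equiv.Perm ℤ) : Set (List ℤ) := {l | ∃ w ∈ ASp z, IsReducedWord w l}

/-- The fpf-involution code `c^Sp_i(z)`. -/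
noncomputable def cSp (z : Equiv.Perm ℤ) (i : ℤ) : ℕ :=
  {j : ℤ | i < j ∧ z j < min i (z i)}.ncard

/-- `RF^Sp_n(z)`: symplectic reduced factorizations into at most `n` decreasing factors. -/
def RFSp (n : ℕ) (z : Equiv.Perm ℤ) : Set (ℕ → List ℤ) :=
  {a | (∀ i, ZDec (a i)) ∧ (∀ m, n ≤ m → a m = []) ∧ concatZ a n ∈ RSp z}

/-- `BRF^Sp_n(z)`: the bounded (by the standard flag) symplectic reduced factorizations:
every letter `m` of the factor in (0-indexed) position `i` satisfies `m ≥ i + 1`. -/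
def BRFSp (n : ℕ) (z : Equiv.Perm ℤ) : Set (ℕ → List ℤ) :=
  {a | a ∈ RFSp n z ∧ ∀ m, ∀ x ∈ a m, (m : ℤ) + 1 ≤ x}

/-! ### Symplectic Coxeter–Knuth equivalence -/

/-- The extra symplectic relations, affecting the first two letters. -/
inductive SpExtra : List ℤ → List ℤ → Prop
  | down (a : ℤ) (t : List ℤ) : SpExtra (a :: (a - 1) :: t) (a :: (a + 1) :: t)
  | comm (a b : ℤ) (t : List ℤ) (h : a % 2 = b % 2) : SpExtra (a :: b :: t) (b :: a :: t)

/-- Symplectic Coxeter–Knuth equivalence. -/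
def SpCKEquiv : List ℤ → List ℤ → Prop :=
  Relation.EqvGen (fun x y => CKStep x y ∨ SpExtra x y)

/-- `half_<(λ)` for a partition given as a list: positive values among `λ_i - i`. -/
def halfLtL (lam : List ℕ) : List ℕ :=
  ((List.range lam.length).map fun k => ((lam.getD k 0 : ℤ) - (k + 1)).toNat).filter
    fun m => decide (0 < m)

/-- The shifted tableau `T^Sp_λ` of shape `half_<(λ)` with entry `i + j` in box `(i,j) ∈ SD_μ`. -/
def TSpTab (lam : List ℕ) : List (List ℤ) :=
  (halfLtL lam).mapIdx fun k m => (List.range m).map fun t => ((2 * (k + 1) + t : ℕ) : ℤ)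

/-- Symmetric partition (list version): the diagram is invariant under transposition. -/
def SymmPartL (lam : List ℕ) : Prop :=
  ∀ p : ℤ × ℤ, p ∈ YDiagL lam ↔ (p.2, p.1) ∈ YDiagL lam

/-- Skew-symmetric partition (list version). -/
def SkewSymmPartL (lam : List ℕ) : Prop :=
  SymmPartL lam ∧ ∀ i : ℤ, (i, i) ∈ YDiagL lam → (i + 1, i + 1) ∉ YDiagL lam →
    (¬ ∃ mu : List ℕ, mu.Pairwise (· ≥ ·) ∧ YDiagL mu = YDiagL lam ∪ {(i, i + 1)} ∧
        YDiagL mu ≠ YDiagL lam) ∧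
    (¬ ∃ mu : List ℕ, mu.Pairwise (· ≥ ·) ∧ YDiagL mu = YDiagL lam \ {(i, i + 1)} ∧
        YDiagL mu ≠ YDiagL lam)

/-! ### Demazure product, orthogonal involution words -/

/-- One step of the Demazure product: multiply by `s_i` on the left if this increases length. -/
noncomputable def demStep (i : ℤ) (x : Equiv.Perm ℤ) : Equiv.Perm ℤ :=
  if lenOf x < lenOf (sT i * x) then sT i * x else x

/-- The Demazure product of the letters of a word. -/
noncomputable def demWordProd (l : List ℤ) : Equiv.Perm ℤ := l.foldr demStep 1

/-- `𝒜^O(z)`: minimal-length `w` with `z = w⁻¹ ∘ w` (Demazure product). -/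
def AO (z : Equiv.Perm ℤ) : Set (Equiv.Perm ℤ) :=
  {w | (∃ l : List ℤ, IsReducedWord w l ∧ demWordProd (l.reverse ++ l) = z) ∧
       ∀ v : Equiv.Perm ℤ, (∃ l : List ℤ, IsReducedWord v l ∧ demWordProd (l.reverse ++ l) = z) →
         lenOf w ≤ lenOf v}

/-- `Cyc(z) = {(a, b) : a < b = z(a)}`. -/
def CycSet (z : Equiv.Perm ℤ) : Set (ℤ × ℤ) := {p | p.1 < p.2 ∧ z p.1 = p.2}

/-- `R^O(z)`: the set of primed involution words for `z`. -/
def RO (z : Equiv.Perm ℤ) : Set (List PLetter) :=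
  {l | ∃ A ⊆ CycSet z, ∃ w ∈ AO z, IsPrimedReducedWord w l ∧ markedSet l = A}

/-- The involution code `c^O_i(z)`. -/
noncomputable def cO (z : Equiv.Perm ℤ) (i : ℤ) : ℕ :=
  {j : ℤ | i < j ∧ z j ≤ min i (z i)}.ncard

/-- `RF^O_n(z)`: orthogonal (primed) reduced factorizations into at most `n` factors. -/
def RFO (n : ℕ) (z : Equiv.Perm ℤ) : Set (ℕ → List PLetter) :=
  {a | (∀ i, PDec (a i)) ∧ (∀ m, n ≤ m → a m = []) ∧ concatP a n ∈ RO z}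

/-- The unprimed image `uRF^O_n(z)` of `RF^O_n(z)`. -/
def uRFO (n : ℕ) (z : Equiv.Perm ℤ) : Set (ℕ → List ℤ) := unprimeF '' RFO n z

/-! ### Primed and orthogonal Coxeter–Knuth equivalence -/

/-- One elementary primed Coxeter–Knuth move. -/
inductive PCKStep : List PLetter → List PLetter → Prop
  | swapACB (u v : List PLetter) {A B C : PLetter} (h1 : A.1 < B.1) (h2 : B.1 < C.1) :
      PCKStep (u ++ A :: C :: B :: v) (u ++ C :: A :: B :: v)
  | swapBCA (u v : List PLetter) {A B C : PLetter} (h1 : A.1 < B.1) (h2 : B.1 < C.1) :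
      PCKStep (u ++ B :: C :: A :: v) (u ++ B :: A :: C :: v)
  | braid00 (u v : List PLetter) {a b : ℤ} (h : b = a + 1 ∨ b = a - 1) :
      PCKStep (u ++ (a, false) :: (b, false) :: (a, false) :: v)
              (u ++ (b, false) :: (a, false) :: (b, false) :: v)
  | braid11 (u v : List PLetter) {a b : ℤ} (h : b = a + 1 ∨ b = a - 1) :
      PCKStep (u ++ (a, true) :: (b, true) :: (a, true) :: v)
              (u ++ (b, true) :: (a, true) :: (b, true) :: v)
  | mixA (u v : List PLetter) {a b : ℤ} (h : b = a + 1 ∨ b = a - 1) :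
      PCKStep (u ++ (a, true) :: (b, false) :: (a, false) :: v)
              (u ++ (b, false) :: (a, false) :: (b, true) :: v)
  | mixB (u v : List PLetter) {a b : ℤ} (h : b = a + 1 ∨ b = a - 1) :
      PCKStep (u ++ (a, false) :: (b, true) :: (a, false) :: v)
              (u ++ (b, false) :: (a, true) :: (b, false) :: v)
  | mixC (u v : List PLetter) {a b : ℤ} (h : b = a + 1 ∨ b = a - 1) :
      PCKStep (u ++ (a, true) :: (b, true) :: (a, false) :: v)
              (u ++ (b, false) :: (a, true) :: (b, true) :: v)
  | mixD (u v : List PLetter) {a b : ℤ} (h : b = a + 1 ∨ b = a - 1) :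
      PCKStep (u ++ (a, true) :: (b, false) :: (a, true) :: v)
              (u ++ (b, true) :: (a, false) :: (b, true) :: v)

/-- The extra orthogonal relations, affecting the first letters of words. -/
inductive OExtra : List PLetter → List PLetter → Prop
  | prime (a : ℤ) (w : List PLetter) : OExtra ((a, false) :: w) ((a, true) :: w)
  | comm00 (a b : ℤ) (w : List PLetter) :
      OExtra ((a, false) :: (b, false) :: w) ((b, false) :: (a, false) :: w)
  | comm01 (a b : ℤ) (w : List PLetter) :
      OExtra ((a, false) :: (b, true) :: w) ((b, false) :: (a, true) :: w)
  | comm10 (a b : ℤ) (w : List PLetter) :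
      OExtra ((a, true) :: (b, false) :: w) ((b, true) :: (a, false) :: w)
  | comm11 (a b : ℤ) (w : List PLetter) :
      OExtra ((a, true) :: (b, true) :: w) ((b, true) :: (a, true) :: w)

/-- Orthogonal Coxeter–Knuth equivalence. -/
def OCKEquiv : List PLetter → List PLetter → Prop :=
  Relation.EqvGen (fun x y => PCKStep x y ∨ OExtra x y)

/-- Increasing shifted tableau with primed entries: removing the primes yields an increasing
shifted tableau. -/
def ShIncrTabP (T : List (List PLetter)) : Prop := ShIncrTab (T.map unprimeW)

/-- Decreasing shifted tableau with primed entries. -/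
def ShDecrTabP (T : List (List PLetter)) : Prop := ShDecrTab (T.map unprimeW)

/-- No primed entries on the main diagonal (the first entry of each row). -/
def DiagUnprimed (T : List (List PLetter)) : Prop :=
  ∀ r ∈ T, ∀ p : PLetter, r.head? = some p → p.2 = false

/-- The row reading word of a primed shifted tableau. -/
def rowwordP (T : List (List PLetter)) : List PLetter := T.reverse.flatten

/-- The shape of a primed tableau. -/
def shapeOfP (T : List (List PLetter)) : List ℕ := T.map List.length

/-! ### Iterated partial operators -/

def iterOpt {α : Type*} (g : α → Option α) : ℕ → α → Option α
  | 0, a => some a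
  | m + 1, a => (g a).bind (iterOpt g m)

/-! ### Weak compositions as functions `ℤ → ℕ` supported on positive integers -/

/-- A weak composition: nonnegative entries indexed by positive integers, finitely supported. -/
def WeakCompF (α : ℤ → ℕ) : Prop :=
  (∀ i ≤ 0, α i = 0) ∧ ∃ N : ℤ, ∀ i, N ≤ i → α i = 0

/-- A partition: a weakly decreasing weak composition. -/
def IsPartitionFun (lam : ℤ → ℕ) : Prop :=
  WeakCompF lam ∧ ∀ i : ℤ, 1 ≤ i → lam (i + 1) ≤ lam i

/-- `lam` is the decreasing rearrangement `λ(α)` of `α`: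
it is a partition with the same part multiplicities. -/
def IsDecRearr (α lam : ℤ → ℕ) : Prop :=
  IsPartitionFun lam ∧ ∀ k : ℕ, 0 < k →
    {i : ℤ | 1 ≤ i ∧ k ≤ α i}.ncard = {i : ℤ | 1 ≤ i ∧ k ≤ lam i}.ncard

/-- The Young diagram of a partition function (1-indexed positions). -/
def YDiag (lam : ℤ → ℕ) : Set (ℤ × ℤ) :=
  {p | 1 ≤ p.1 ∧ 1 ≤ p.2 ∧ p.2 ≤ (lam p.1 : ℤ)}

/-- Symmetric partition: diagram invariant under transposition. -/
def SymmPartF (lam : ℤ → ℕ) : Prop :=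
  IsPartitionFun lam ∧ ∀ p : ℤ × ℤ, p ∈ YDiag lam ↔ (p.2, p.1) ∈ YDiag lam

/-- Skew-symmetric partition. -/
def SkewSymmPartF (lam : ℤ → ℕ) : Prop :=
  SymmPartF lam ∧ ∀ i : ℤ, (i, i) ∈ YDiag lam → (i + 1, i + 1) ∉ YDiag lam →
    (¬ ∃ mu : ℤ → ℕ, IsPartitionFun mu ∧ YDiag mu = YDiag lam ∪ {(i, i + 1)} ∧
        YDiag mu ≠ YDiag lam) ∧
    (¬ ∃ mu : ℤ → ℕ, IsPartitionFun mu ∧ YDiag mu = YDiag lam \ {(i, i + 1)} ∧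
        YDiag mu ≠ YDiag lam)

/-- The Demazure action of a simple transposition on weak compositions:
sort the entries in positions `i, i+1` into weakly increasing order. -/
def sComp (i : ℤ) (β : ℤ → ℕ) : ℤ → ℕ :=
  if β (i + 1) < β i then
    (fun j => if j = i then β (i + 1) else if j = i + 1 then β i else β j)
  else β

/-- The Demazure action of a word on a weak composition (rightmost letter acts first). -/
def demCompAct (l : List ℤ) (β : ℤ → ℕ) : ℤ → ℕ := l.foldr sComp β

/-- `u = u(α)`: the minimal-length permutation with `α = u ∘ λ(α)` under the Demazure action. -/
def IsUofAlpha (α lam : ℤ → ℕ) (u : Equiv.Perm ℤ) : Prop :=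
  u ∈ SinftySet ∧ (∃ l : List ℤ, IsReducedWord u l ∧ demCompAct l lam = α) ∧
  ∀ v ∈ SinftySet, (∃ l : List ℤ, IsReducedWord v l ∧ demCompAct l lam = α) → lenOf u ≤ lenOf v

/-! ### Isobaric divided differences, Schubert polynomials -/

/-- `g = π_i f`, i.e. `(x_i - x_{i+1}) g = x_i f - x_{i+1} (s_i f)`. -/
def IsPiApply (i : ℤ) (f g : MvPolynomial ℤ ℤ) : Prop :=
  (X i - X (i + 1)) * g = X i * f - X (i + 1) * MvPolynomial.rename (sT i) f

/-- `g = π_{i_1} π_{i_2} ⋯ π_{i_k} f` for the word `l = [i_1, …, i_k]`. -/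
inductive IsPiWord : List ℤ → MvPolynomial ℤ ℤ → MvPolynomial ℤ ℤ → Prop
  | nil (f : MvPolynomial ℤ ℤ) : IsPiWord [] f f
  | cons (i : ℤ) (t : List ℤ) (f h g : MvPolynomial ℤ ℤ) :
      IsPiWord t f h → IsPiApply i h g → IsPiWord (i :: t) f g

/-- The dominant monomial `x^λ = ∏_{k=1}^{M} x_k^{λ_k}`. -/
noncomputable def xpow (lam : ℤ → ℕ) (M : ℕ) : MvPolynomial ℤ ℤ :=
  ∏ k ∈ Finset.range M, (X ((k : ℤ) + 1) : MvPolynomial ℤ ℤ) ^ lam ((k : ℤ) + 1)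

/-- The defining axioms of the family of Schubert polynomials `{𝔖_w}_{w ∈ S_∞}`:
`𝔖_w = x^λ` for `w` dominant of shape `λ`, and
`∂_i 𝔖_w = 𝔖_{w s_i}` whenever `w(i) > w(i+1)` (cleared of denominators). -/
def IsSchubertFamily (Sf : Equiv.Perm ℤ → MvPolynomial ℤ ℤ) : Prop :=
  (∀ w ∈ SinftySet, ∀ lam : ℤ → ℕ, IsPartitionFun lam → RotheD w = YDiag lam →
     ∀ M : ℕ, (∀ i : ℤ, (M : ℤ) < i → lam i = 0) → Sf w = xpow lam M) ∧
  (∀ w ∈ SinftySet, ∀ i : ℤ, 1 ≤ i → w (i + 1) < w i →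
     (X i - X (i + 1)) * Sf (w * sT i) = Sf w - MvPolynomial.rename (sT i) (Sf w))

/-- Substituting `x_m = 0` for all `m > n` in a polynomial. -/
noncomputable def restrictVars (n : ℕ) (g : MvPolynomial ℤ ℤ) : MvPolynomial ℤ ℤ :=
  (MvPolynomial.aeval fun m : ℤ => if m ≤ (n : ℤ) then (X m : MvPolynomial ℤ ℤ) else 0) g

/-! ### Queer crystal operators `ē_1`, `f̄_1`, `σ_i` on symplectic factorizations -/

/-- Insert a letter directly after the first letter of a list. -/
def insertAfterFirst (c : ℤ) : List ℤ → List ℤ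
  | [] => [c]
  | x :: t => x :: c :: t

/-- The operator `ē_1` on symplectic reduced factorizations. -/
def e1barOp (a : ℕ → List ℤ) : Option (ℕ → List ℤ) :=
  match a 1 with
  | [] => none
  | y :: s =>
    if ∀ x ∈ a 0, x < y then
      if Even y then
        some (Function.update (Function.update a 1 s) 0 (y :: a 0))
      else
        some (Function.update (Function.update a 1 s) 0 (insertAfterFirst (y - 2) (a 0)))
    else none

/-- The operator `f̄_1` on symplectic reduced factorizations. -/
def f1barOp (a : ℕ → List ℤ) : Option (ℕ → List ℤ) :=
  match a 0 with
  | [] => none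
  | x :: _ =>
    if ∀ y ∈ a 1, y < x then
      if (x - 1) ∈ a 0 then
        some (Function.update (Function.update a 0 ((a 0).erase (x - 1))) 1 ((x + 1) :: a 1))
      else
        some (Function.update (Function.update a 0 ((a 0).erase x)) 1 (x :: a 1))
    else none

/-- The string-reversing operator `σ` acting on factors `i, i+1` (0-indexed):
apply `f^k` where `k = wt_i - wt_{i+1}` if `k ≥ 0`, and `e^{-k}` otherwise. -/
def sigZ (i : ℕ) (a : ℕ → List ℤ) : Option (ℕ → List ℤ) :=
  if (a (i + 1)).length ≤ (a i).length then
    iterOpt (fZ i) ((a i).length - (a (i + 1)).length) a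
  else
    iterOpt (eZ i) ((a (i + 1)).length - (a i).length) a

/-- The operators `ē_{j+1}` (0-indexed `j`), defined by
`ē_i = σ_{i-1} σ_i ē_{i-1} σ_i σ_{i-1}`. -/
def ebarOp : ℕ → (ℕ → List ℤ) → Option (ℕ → List ℤ)
  | 0 => e1barOp
  | j + 1 => fun a =>
      (sigZ j a).bind fun b => (sigZ (j + 1) b).bind fun c =>
        (ebarOp j c).bind fun d => (sigZ (j + 1) d).bind (sigZ j)

/-- The operators `f̄_{j+1}` (0-indexed `j`). -/
def fbarOp : ℕ → (ℕ → List ℤ) → Option (ℕ → List ℤ)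
  | 0 => f1barOp
  | j + 1 => fun a =>
      (sigZ j a).bind fun b => (sigZ (j + 1) b).bind fun c =>
        (fbarOp j c).bind fun d => (sigZ (j + 1) d).bind (sigZ j)

/-! ### Crystal Demazure operators on symplectic factorizations -/

/-- The crystal Demazure operator `𝔇_i` (paper-indexed `i ∈ [n-1]`) inside the ambient
crystal `RF^Sp_n(z)`:  all `b` with `e_i^m(b) ∈ X` for some `m ∈ ℕ`. -/
def DOpSp (n : ℕ) (z : Equiv.Perm ℤ) (i : ℤ) (Xs : Set (ℕ → List ℤ)) : Set (ℕ → List ℤ) :=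
  {b | b ∈ RFSp n z ∧ ∃ m : ℕ, ∃ b', iterOpt (eZ (i - 1).toNat) m b = some b' ∧ b' ∈ Xs}

/-- `𝔇_{i_1} 𝔇_{i_2} ⋯ 𝔇_{i_k} X` for the word `l = [i_1, …, i_k]`. -/
def DemFoldSp (n : ℕ) (z : Equiv.Perm ℤ) (l : List ℤ) (Xs : Set (ℕ → List ℤ)) :
    Set (ℕ → List ℤ) :=
  l.foldr (fun i Y => DOpSp n z i Y) Xs

/-!
Write `invFiber w b` for the set of inversions `(a, b)` of `w` with larger entry `b`; its size is
`c_{w(b)}(w⁻¹)`. A strictly decreasing word has at most one inversion with a given larger entry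
(it cycles each run of consecutive letters), and right multiplication by such a word raises each of
these counts by at most one. Hence a product of `n` weakly decreasing words (where equal adjacent
letters cancel) has all codes `≤ n`; the primes play no role in this direction.

Conversely, let `d` be the decreasing word of all `b - 1` such that `w` has an inversion with
larger entry `b`. Then `Inv(d) ⊆ Inv(w)`, and `w d⁻¹` has each nonzero count lowered by one and
`ℓ(d)` fewer inversions. Induction on `n` gives `n` decreasing factors of total length `|Inv(w)|`,
which is therefore a reduced word for `w`. Priming the letter in position `j` exactly when its
inversion `(a_j, b_j)` lies in `A` yields marked set `A`, because every inversion of `w` occurs as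
some `(a_j, b_j)`.
-/

/-! ### Inversions -/

lemma sT_apply (i x : ℤ) : sT i x = if x = i then i + 1 else if x = i + 1 then i else x := by
  simp [sT, Equiv.swap_apply_def]

lemma sT_inv (i : ℤ) : (sT i)⁻¹ = sT i := Equiv.swap_inv _ _

lemma sT_mul_self (i : ℤ) : sT i * sT i = 1 := Equiv.swap_mul_self _ _

@[simp] lemma wordProd_nil : wordProd [] = 1 := rfl

@[simp] lemma wordProd_cons (c : ℤ) (t : List ℤ) : wordProd (c :: t) = sT c * wordProd t := by
  simp [wordProd]

@[simp] lemma wordProd_append (u v : List ℤ) : wordProd (u ++ v) = wordProd u * wordProd v := by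
  simp [wordProd]

lemma wordProd_reverse (l : List ℤ) : wordProd l.reverse = (wordProd l)⁻¹ := by
  induction l with
  | nil => rfl
  | cons c t ih => simp [ih, sT_inv]

lemma exists_wordProd_apply_eq_of_lt_natAbs (l : List ℤ) :
    ∃ B : ℕ, ∀ x : ℤ, B < x.natAbs → wordProd l x = x := by
  induction l with
  | nil => exact ⟨0, fun x _ => rfl⟩
  | cons c t ih =>
    obtain ⟨B, hB⟩ := ih
    refine ⟨max B (c.natAbs + 1), fun x hx => ?_⟩
    rw [wordProd_cons, Equiv.Perm.mul_apply, hB x (by omega), sT_apply]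
    split_ifs <;> omega

lemma concatZ_succ (a : ℕ → List ℤ) (n : ℕ) : concatZ a (n + 1) = concatZ a n ++ a n := by
  simp [concatZ, List.range_succ]

def invFiber (w : Equiv.Perm ℤ) (b : ℤ) : Set ℤ := {a | a < b ∧ w b < w a}

lemma codeOf_inv_apply (w : Equiv.Perm ℤ) (b : ℤ) :
    codeOf w⁻¹ (w b) = (invFiber w b).ncard := by
  have : {j : ℤ | w b < j ∧ w⁻¹ j < w⁻¹ (w b)} = w '' invFiber w b := by
    ext j
    constructor
    · rintro ⟨h₁, h₂⟩
      exact ⟨w⁻¹ j, ⟨by simpa using h₂, by simpa using h₁⟩, by simp⟩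
    · rintro ⟨a, ⟨h₁, h₂⟩, rfl⟩
      exact ⟨h₂, by simpa using h₁⟩
  rw [codeOf, this, Set.ncard_image_of_injective _ w.injective]

lemma invFiber_finite {w : Equiv.Perm ℤ} (hw : (InvSet w).Finite) (b : ℤ) :
    (invFiber w b).Finite :=
  (hw.image Prod.fst).subset fun a ha => ⟨(a, b), ha, rfl⟩

lemma invFiber_mul_subset (u v : Equiv.Perm ℤ) (b : ℤ) :
    invFiber (u * v) b ⊆ ⇑v⁻¹ '' invFiber u (v b) ∪ invFiber v b := by
  rintro a ⟨hab, huv⟩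
  simp only [Equiv.Perm.mul_apply] at huv
  by_cases hv : v b < v a
  · exact Or.inr ⟨hab, hv⟩
  · have : v a ≠ v b := fun h => by rw [h] at huv; omega
    exact Or.inl ⟨v a, ⟨by omega, huv⟩, by simp⟩

lemma InvSet_mul_inv_of_subset {w v : Equiv.Perm ℤ} (hvw : InvSet v ⊆ InvSet w) :
    InvSet (w * v⁻¹) = Prod.map v v '' (InvSet w \ InvSet v) := by
  ext ⟨a, b⟩
  constructor
  · rintro ⟨hab, hw⟩
    simp only [Equiv.Perm.mul_apply] at hw
    have hlt : v⁻¹ a < v⁻¹ b := by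
      by_contra! hge
      have hne : v⁻¹ a ≠ v⁻¹ b := fun h => by simp at h; omega
      have := (hvw (show (v⁻¹ b, v⁻¹ a) ∈ InvSet v from
        ⟨lt_of_le_of_ne hge hne.symm, by simpa using hab⟩)).2
      simp only at this
      omega
    refine ⟨(v⁻¹ a, v⁻¹ b), ⟨⟨hlt, hw⟩, fun h => ?_⟩, by simp⟩
    have := h.2
    simp only [Equiv.Perm.coe_inv, Equiv.apply_symm_apply] at this
    omega
  · rintro ⟨⟨x, y⟩, ⟨⟨hxy, hw⟩, hv⟩, he⟩
    simp only [Prod.map, Prod.mk.injEq] at he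
    obtain ⟨rfl, rfl⟩ := he
    have hne : v x ≠ v y := fun h => by have := v.injective h; omega
    have : v x < v y := lt_of_le_of_ne (not_lt.mp fun h => hv ⟨hxy, h⟩) hne
    exact ⟨this, by simpa using hw⟩

lemma invFiber_mul_inv_of_subset {w v : Equiv.Perm ℤ} (hvw : InvSet v ⊆ InvSet w) (b : ℤ) :
    invFiber (w * v⁻¹) (v b) = v '' (invFiber w b \ invFiber v b) := by
  ext a
  change (a, v b) ∈ InvSet (w * v⁻¹) ↔ _
  rw [InvSet_mul_inv_of_subset hvw]
  constructor
  · rintro ⟨⟨x, y⟩, hxy, he⟩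
    simp only [Prod.map, Prod.mk.injEq] at he
    obtain ⟨rfl, hy⟩ := he
    rw [v.injective hy] at hxy
    exact ⟨x, hxy, rfl⟩
  · rintro ⟨x, hx, rfl⟩
    exact ⟨(x, b), hx, rfl⟩

/-- The pair `(a_j, b_j)` attached to the (0-indexed) position `j` of the word `l`. -/
def invAt (l : List ℤ) (j : ℕ) : ℤ × ℤ :=
  (wordProd (l.drop (j + 1)).reverse (l.getD j 0),
    wordProd (l.drop (j + 1)).reverse (l.getD j 0 + 1))

lemma InvSet_wordProd_subset_range_invAt (l : List ℤ) :
    InvSet (wordProd l) ⊆ invAt l '' Set.Iio l.length := by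
  induction l with
  | nil =>
    rintro ⟨a, b⟩ ⟨hab, h⟩
    simp at h
    omega
  | cons c t ih =>
    rintro ⟨a, b⟩ ⟨hab, h⟩
    simp only [wordProd_cons, Equiv.Perm.mul_apply] at h
    set v := wordProd t
    by_cases hv : v b < v a
    · obtain ⟨j, hj, he⟩ := ih ⟨hab, hv⟩
      exact ⟨j + 1, by simpa using hj, he⟩
    · have hne : v a ≠ v b := fun he => by have := v.injective he; omega
      have hc : v a = c ∧ v b = c + 1 := by
        rw [sT_apply, sT_apply] at h
        split_ifs at h <;> omega
      have : invAt (c :: t) 0 = (v⁻¹ c, v⁻¹ (c + 1)) := by simp [invAt, wordProd_reverse, v]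
      refine ⟨0, by simp, ?_⟩
      rw [this, ← hc.2, ← hc.1]
      simp

lemma InvSet_wordProd_finite (l : List ℤ) : (InvSet (wordProd l)).Finite :=
  ((Set.finite_Iio _).image _).subset (InvSet_wordProd_subset_range_invAt l)

lemma ncard_InvSet_wordProd_le (l : List ℤ) : (InvSet (wordProd l)).ncard ≤ l.length :=
  calc (InvSet (wordProd l)).ncard ≤ (invAt l '' Set.Iio l.length).ncard :=
        Set.ncard_le_ncard (InvSet_wordProd_subset_range_invAt l) ((Set.finite_Iio _).image _)
    _ ≤ (Set.Iio l.length).ncard := Set.ncard_image_le (Set.finite_Iio _)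
    _ = l.length := by simp [← Finset.coe_range]

lemma isReducedWord_of_length_eq {w : Equiv.Perm ℤ} {l : List ℤ} (hl : wordProd l = w)
    (hlen : l.length = (InvSet w).ncard) : IsReducedWord w l :=
  ⟨hl, fun m hm => hlen ▸ hm ▸ ncard_InvSet_wordProd_le m⟩

lemma StrictMono.add_sub_le_int {f : ℤ → ℤ} (hf : StrictMono f) {y x : ℤ} (hyx : y ≤ x) :
    f y + (x - y) ≤ f x := by
  induction x, hyx using Int.leInduction with
  | base => simp
  | succ x _ ih => have := hf (lt_add_one x); omega

lemma wordProd_eq_one_of_InvSet_eq_empty {l : List ℤ} (h : InvSet (wordProd l) = ∅) :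
    wordProd l = 1 := by
  set w := wordProd l
  have hw : StrictMono w := fun a b hab => by
    have : (a, b) ∉ InvSet w := h ▸ Set.notMem_empty _
    have hne : w a ≠ w b := fun he => by have := w.injective he; omega
    exact lt_of_le_of_ne (not_lt.mp fun hba => this ⟨hab, hba⟩) hne
  obtain ⟨B, hB⟩ := exists_wordProd_apply_eq_of_lt_natAbs l
  ext x
  have hlo := hw.add_sub_le_int (show x - B - x.natAbs - 1 ≤ x by omega)
  have hhi := hw.add_sub_le_int (show x ≤ x + B + x.natAbs + 1 by omega)
  rw [hB (x - B - x.natAbs - 1) (by omega)] at hlo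
  rw [hB (x + B + x.natAbs + 1) (by omega)] at hhi
  simp only [Equiv.Perm.coe_one, id_eq]
  omega

/-! ### Strictly decreasing words -/

section Decreasing

variable {d : List ℤ}

lemma ZDec.cons_iff {c : ℤ} {t : List ℤ} : ZDec (c :: t) ↔ (∀ i ∈ t, i < c) ∧ ZDec t :=
  List.pairwise_cons

/-- `wordProd d` cycles each maximal run `a, a + 1, …, b - 1` of letters of `d` as
`b ↦ b - 1 ↦ ⋯ ↦ a ↦ b`. -/
lemma wordProd_apply_of_zdec (hd : ZDec d) (x : ℤ) :
    (x - 1 ∈ d → wordProd d x = x - 1) ∧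
      (x - 1 ∉ d → x ≤ wordProd d x ∧ wordProd d x ∉ d ∧
        ∀ z, x ≤ z → z < wordProd d x → z ∈ d) := by
  induction d generalizing x with
  | nil => simp
  | cons c t ih =>
    obtain ⟨hct, ht⟩ := ZDec.cons_iff.mp hd
    obtain ⟨ih₁, ih₂⟩ := ih ht x
    have hc : c ∉ t := fun h => (hct c h).false
    have hc' : c + 1 ∉ t := fun h => by have := hct _ h; omega
    simp only [wordProd_cons, Equiv.Perm.mul_apply, List.mem_cons, not_or]
    refine ⟨fun hx => ?_, fun ⟨hxc, hxt⟩ => ?_⟩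
    · rcases hx with hx | hx
      · obtain ⟨h₁, -, h₃⟩ := ih₂ (by rw [hx]; exact hc)
        have : wordProd t x = x := by
          by_contra hne
          have := h₃ x le_rfl (lt_of_le_of_ne h₁ (Ne.symm hne))
          exact hc' (by rw [← hx]; simpa using this)
        rw [this, sT_apply]
        split_ifs <;> omega
      · have := hct _ hx
        rw [ih₁ hx, sT_apply]
        split_ifs <;> omega
    · obtain ⟨h₁, h₂, h₃⟩ := ih₂ hxt
      rw [sT_apply]
      split_ifs with hy hy'
      · refine ⟨by omega, ⟨by omega, hc'⟩, fun z hz₁ hz₂ => ?_⟩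
        rcases eq_or_lt_of_le (show z ≤ c by omega) with rfl | hz
        · exact Or.inl rfl
        · exact Or.inr (h₃ z hz₁ (by omega))
      · exact absurd (h₃ c (by omega) (by omega)) hc
      · exact ⟨h₁, ⟨hy, h₂⟩, fun z hz₁ hz₂ => Or.inr (h₃ z hz₁ hz₂)⟩

lemma invFiber_wordProd_of_zdec (hd : ZDec d) (b : ℤ) :
    invFiber (wordProd d) b =
      {a | a < b ∧ a - 1 ∉ d ∧ ∀ y, a ≤ y → y < b → y ∈ d} := by
  ext a
  obtain ⟨ha₁, ha₂⟩ := wordProd_apply_of_zdec hd a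
  obtain ⟨hb₁, hb₂⟩ := wordProd_apply_of_zdec hd b
  constructor
  · rintro ⟨hab, hw⟩
    have ha : a - 1 ∉ d := fun ha => by
      rw [ha₁ ha] at hw
      by_cases hb : b - 1 ∈ d
      · rw [hb₁ hb] at hw; omega
      · have := (hb₂ hb).1; omega
    obtain ⟨hae, -, hrun⟩ := ha₂ ha
    by_cases hb : b - 1 ∈ d
    · rw [hb₁ hb] at hw
      exact ⟨hab, ha, fun y hy₁ hy₂ => hrun y hy₁ (by omega)⟩
    · exact absurd (hrun (b - 1) (by omega) (by have := (hb₂ hb).1; omega)) hb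
  · rintro ⟨hab, ha, hrun⟩
    obtain ⟨hae, hend, -⟩ := ha₂ ha
    have hb : b - 1 ∈ d := hrun (b - 1) (by omega) (by omega)
    have : b ≤ wordProd d a := by
      by_contra! h
      exact hend (hrun _ hae h)
    exact ⟨hab, by rw [hb₁ hb]; omega⟩

lemma invFiber_wordProd_subsingleton_of_zdec (hd : ZDec d) (b : ℤ) :
    (invFiber (wordProd d) b).Subsingleton := by
  rw [invFiber_wordProd_of_zdec hd]
  rintro a ⟨hab, ha, hrun⟩ a' ⟨ha'b, ha', hrun'⟩
  by_contra hne
  rcases lt_or_gt_of_ne hne with h | h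
  · exact ha' (hrun _ (by omega) (by omega))
  · exact ha (hrun' _ (by omega) (by omega))

lemma invFiber_wordProd_nonempty_iff_of_zdec (hd : ZDec d) (b : ℤ) :
    (invFiber (wordProd d) b).Nonempty ↔ b - 1 ∈ d := by
  rw [invFiber_wordProd_of_zdec hd]
  refine ⟨fun ⟨a, hab, _, hrun⟩ => hrun _ (by omega) (by omega), fun hb => ?_⟩
  -- the run ending at `b - 1` starts at `b - qDown d (b - 1)`
  have hq : qDown d (b - 1) ≠ 0 := fun h => by
    have := Nat.find_spec (exists_sub_not_mem d (b - 1))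
    rw [qDown] at h
    simp [h, hb] at this
  refine ⟨b - qDown d (b - 1), by omega, ?_, fun y hy₁ hy₂ => ?_⟩
  · have := Nat.find_spec (exists_sub_not_mem d (b - 1))
    rwa [show b - (qDown d (b - 1) : ℤ) - 1 = b - 1 - (qDown d (b - 1) : ℤ) by ring]
  · have := Nat.find_min (exists_sub_not_mem d (b - 1)) (m := (b - 1 - y).toNat)
      (by rw [← qDown]; omega)
    rwa [not_not, show b - 1 - ((b - 1 - y).toNat : ℤ) = y by omega] at this

lemma ncard_invFiber_wordProd_of_zdec (hd : ZDec d) (b : ℤ) :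
    (invFiber (wordProd d) b).ncard = if b - 1 ∈ d then 1 else 0 := by
  have hs := invFiber_wordProd_subsingleton_of_zdec hd b
  split_ifs with hb
  · obtain ⟨a, ha⟩ := (invFiber_wordProd_nonempty_iff_of_zdec hd b).mpr hb
    rw [hs.eq_singleton_of_mem ha, Set.ncard_singleton]
  · have := mt (invFiber_wordProd_nonempty_iff_of_zdec hd b).mp hb
    rw [Set.not_nonempty_iff_eq_empty.mp this, Set.ncard_empty]

lemma ncard_InvSet_wordProd_of_zdec (hd : ZDec d) : (InvSet (wordProd d)).ncard = d.length := by
  have hinj : Set.InjOn Prod.snd (InvSet (wordProd d)) := fun p hp q hq h =>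
    Prod.ext (invFiber_wordProd_subsingleton_of_zdec hd p.2 hp (h ▸ hq)) h
  have himage : Prod.snd '' InvSet (wordProd d) = (· + 1) '' {x | x ∈ d} := by
    ext b
    refine ⟨fun ⟨p, hp, hpb⟩ => ⟨b - 1, ?_, by simp⟩, fun ⟨x, hx, hxb⟩ => ?_⟩
    · exact (invFiber_wordProd_nonempty_iff_of_zdec hd b).mp ⟨p.1, hpb ▸ hp⟩
    · obtain ⟨a, ha⟩ :=
        (invFiber_wordProd_nonempty_iff_of_zdec hd b).mpr (by rw [← hxb]; simpa using hx)
      exact ⟨(a, b), ha, rfl⟩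
  rw [← hinj.ncard_image, himage, Set.ncard_image_of_injective _ (add_left_injective 1),
    show {x | x ∈ d} = (d.toFinset : Set ℤ) by ext; simp, Set.ncard_coe_finset,
    List.toFinset_card_of_nodup (hd.imp ne_of_gt)]

end Decreasing

lemma exists_zdec_sublist_wordProd_eq {l : List ℤ} (hl : l.Pairwise (· ≥ ·)) :
    ∃ d, d.Sublist l ∧ ZDec d ∧ wordProd d = wordProd l := by
  induction l with
  | nil => exact ⟨[], List.Sublist.slnil, List.Pairwise.nil, rfl⟩
  | cons c t ih =>
    obtain ⟨hct, ht⟩ := List.pairwise_cons.mp hl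
    obtain ⟨d, hdt, hd, hprod⟩ := ih ht
    rcases d with _ | ⟨x, d⟩
    · exact ⟨[c], hdt.cons_cons c, List.pairwise_singleton _ _, by simp [← hprod]⟩
    obtain ⟨hxd, hd'⟩ := ZDec.cons_iff.mp hd
    rcases (hct x (hdt.subset (by simp))).lt_or_eq with hxc | rfl
    · refine ⟨c :: x :: d, hdt.cons_cons c, ZDec.cons_iff.mpr ⟨fun i hi => ?_, hd⟩,
        by simp [hprod]⟩
      rcases List.mem_cons.mp hi with rfl | hi
      · exact hxc
      · exact (hxd i hi).trans hxc
    · refine ⟨d, (List.sublist_cons_self _ d).trans (hdt.trans (List.sublist_cons_self _ t)),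
        hd', ?_⟩
      rw [wordProd_cons, ← hprod, wordProd_cons, ← mul_assoc, sT_mul_self, one_mul]

lemma ncard_invFiber_wordProd_le_one {l : List ℤ} (hl : l.Pairwise (· ≥ ·)) (b : ℤ) :
    (invFiber (wordProd l) b).ncard ≤ 1 := by
  obtain ⟨d, -, hd, hprod⟩ := exists_zdec_sublist_wordProd_eq hl
  rw [← hprod, ncard_invFiber_wordProd_of_zdec hd]
  split_ifs <;> omega

lemma ncard_invFiber_wordProd_concatZ_le (a : ℕ → List ℤ)
    (ha : ∀ k, (a k).Pairwise (· ≥ ·)) (n : ℕ) (b : ℤ) :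
    (invFiber (wordProd (concatZ a n)) b).ncard ≤ n := by
  induction n generalizing b with
  | zero =>
    have : ∀ x, ¬(x < b ∧ b < x) := fun x h => lt_asymm h.1 h.2
    simp [concatZ, invFiber, this]
  | succ n ih =>
    rw [concatZ_succ, wordProd_append]
    set u := wordProd (concatZ a n)
    set v := wordProd (a n)
    have hu := invFiber_finite (InvSet_wordProd_finite (concatZ a n)) (v b)
    calc (invFiber (u * v) b).ncard
        ≤ (⇑v⁻¹ '' invFiber u (v b) ∪ invFiber v b).ncard :=
          Set.ncard_le_ncard (invFiber_mul_subset u v b)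
            ((hu.image _).union (invFiber_finite (InvSet_wordProd_finite _) b))
      _ ≤ (⇑v⁻¹ '' invFiber u (v b)).ncard + (invFiber v b).ncard := Set.ncard_union_le _ _
      _ ≤ n + 1 := add_le_add ((Set.ncard_image_le hu).trans (ih _))
          (ncard_invFiber_wordProd_le_one (ha n) b)

lemma unprimeW_concatP (a : ℕ → List PLetter) (n : ℕ) :
    unprimeW (concatP a n) = concatZ (unprimeF a) n := by
  simp only [unprimeW, concatP, concatZ, List.map_flatten, List.map_map]
  rfl

lemma PDec.pairwise_ge_unprimeW {l : List PLetter} (hl : PDec l) :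
    (unprimeW l).Pairwise (· ≥ ·) :=
  List.pairwise_map.mpr <| hl.imp fun {p q} hpq => by
    simp only [pval] at hpq
    split_ifs at hpq <;> omega

theorem codeOf_inv_le_of_mem_RFplusN {n : ℕ} {w : Equiv.Perm ℤ} {A : Set (ℤ × ℤ)}
    {a : ℕ → List PLetter} (ha : a ∈ RFplusN n w A) (i : ℤ) : codeOf w⁻¹ i ≤ n := by
  obtain ⟨hdec, -, hred, -⟩ := ha
  have hw : wordProd (concatZ (unprimeF a) n) = w := unprimeW_concatP a n ▸ hred.1
  obtain ⟨b, rfl⟩ := w.surjective i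
  rw [codeOf_inv_apply, ← hw]
  exact ncard_invFiber_wordProd_concatZ_le _ (fun k => (hdec k).pairwise_ge_unprimeW) n b

/-! ### Peeling off a decreasing factor -/

section Peel

variable {w : Equiv.Perm ℤ} {d : List ℤ}

lemma invFiber_wordProd_subset_of_mem_iff (hd : ZDec d)
    (hdw : ∀ x, x ∈ d ↔ (invFiber w (x + 1)).Nonempty) (b : ℤ) :
    invFiber (wordProd d) b ⊆ invFiber w b := by
  rw [invFiber_wordProd_of_zdec hd]
  rintro a ⟨hab, ha, hrun⟩
  -- `w` has no inversion ending at `a`, and one ending at each `y ∈ (a, b]`; by induction on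
  -- `y`, this forces `w y < w a`.
  have hbelow : ∀ x < a, w x < w a := fun x hx => by
    have : x ∉ invFiber w a := fun h => ha ((hdw _).mpr ⟨x, by simpa using h⟩)
    have hne : w x ≠ w a := fun he => by have := w.injective he; omega
    exact lt_of_le_of_ne (not_lt.mp fun h => this ⟨hx, h⟩) hne
  have key : ∀ k : ℕ, ∀ y, a < y → y ≤ b → y - a ≤ k → w y < w a := by
    intro k
    induction k with
    | zero => intro y h₁ _ h₃; omega
    | succ k ih =>
      intro y h₁ h₂ _
      obtain ⟨x, hxy, hwx⟩ := (hdw (y - 1)).mp (hrun _ (by omega) (by omega))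
      rw [sub_add_cancel] at hxy hwx
      rcases lt_trichotomy x a with hx | rfl | hx
      · exact hwx.trans (hbelow x hx)
      · exact hwx
      · exact hwx.trans (ih x hx (by omega) (by omega))
  exact ⟨hab, key (b - a).toNat b hab le_rfl (by omega)⟩

lemma InvSet_wordProd_subset_of_mem_iff (hd : ZDec d)
    (hdw : ∀ x, x ∈ d ↔ (invFiber w (x + 1)).Nonempty) :
    InvSet (wordProd d) ⊆ InvSet w :=
  fun p hp => invFiber_wordProd_subset_of_mem_iff hd hdw p.2 hp

lemma ncard_invFiber_mul_inv_wordProd_le {n : ℕ} (hw : (InvSet w).Finite) (hd : ZDec d)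
    (hdw : ∀ x, x ∈ d ↔ (invFiber w (x + 1)).Nonempty)
    (hn : ∀ b, (invFiber w b).ncard ≤ n + 1) (c : ℤ) :
    (invFiber (w * (wordProd d)⁻¹) c).ncard ≤ n := by
  obtain ⟨b, rfl⟩ := (wordProd d).surjective c
  have hsub := invFiber_wordProd_subset_of_mem_iff hd hdw b
  rw [invFiber_mul_inv_of_subset (InvSet_wordProd_subset_of_mem_iff hd hdw),
    Set.ncard_image_of_injective _ (wordProd d).injective,
    Set.ncard_sdiff hsub ((invFiber_finite hw b).subset hsub)]
  by_cases hb : b - 1 ∈ d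
  · rw [ncard_invFiber_wordProd_of_zdec hd, if_pos hb]
    exact Nat.sub_le_of_le_add (hn b)
  · have : invFiber w b = ∅ := by
      rw [Set.eq_empty_iff_forall_notMem]
      exact fun a ha => hb ((hdw _).mpr ⟨a, by simpa using ha⟩)
    simp [this]

lemma ncard_InvSet_mul_inv_wordProd_add_length (hw : (InvSet w).Finite) (hd : ZDec d)
    (hdw : ∀ x, x ∈ d ↔ (invFiber w (x + 1)).Nonempty) :
    (InvSet (w * (wordProd d)⁻¹)).ncard + d.length = (InvSet w).ncard := by
  have hsub := InvSet_wordProd_subset_of_mem_iff hd hdw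
  rw [InvSet_mul_inv_of_subset hsub, Set.ncard_image_of_injective _
    (Prod.map_injective.mpr ⟨(wordProd d).injective, (wordProd d).injective⟩),
    ← ncard_InvSet_wordProd_of_zdec hd]
  exact Set.ncard_sdiff_add_ncard_of_subset hsub hw

end Peel

lemma exists_zdec_mem_iff {S : Set ℤ} (hS : S.Finite) :
    ∃ d, ZDec d ∧ ∀ x, x ∈ d ↔ x ∈ S :=
  ⟨(hS.toFinset.sort (· ≤ ·)).reverse,
    List.pairwise_reverse.mpr (List.sortedLT_iff_pairwise.mp (Finset.sortedLT_sort _)),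
    fun x => by simp⟩

lemma concatZ_update_self_succ (a : ℕ → List ℤ) (n : ℕ) (d : List ℤ) :
    concatZ (Function.update a n d) (n + 1) = concatZ a n ++ d := by
  rw [concatZ_succ, Function.update_self]
  congr 1
  refine congrArg List.flatten (List.map_congr_left fun k hk => ?_)
  exact Function.update_of_ne (List.mem_range.mp hk).ne _ _

theorem exists_zdec_factorization (n : ℕ) :
    ∀ w ∈ SZSet, (∀ b, (invFiber w b).ncard ≤ n) →
      ∃ a : ℕ → List ℤ, (∀ k, ZDec (a k)) ∧ (∀ k, n ≤ k → a k = []) ∧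
        wordProd (concatZ a n) = w ∧ (concatZ a n).length = (InvSet w).ncard := by
  induction n with
  | zero =>
    rintro _ ⟨l, rfl⟩ hn
    have hinv : InvSet (wordProd l) = ∅ := Set.eq_empty_iff_forall_notMem.mpr fun p hp =>
      (Set.ncard_pos (invFiber_finite (InvSet_wordProd_finite l) p.2)).mpr ⟨p.1, hp⟩
        |>.ne' (Nat.le_zero.mp (hn p.2))
    refine ⟨fun _ => [], fun _ => List.Pairwise.nil, fun _ _ => rfl, ?_, ?_⟩
    · exact (wordProd_eq_one_of_InvSet_eq_empty hinv).symm
    · simp [hinv, concatZ]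
  | succ n ih =>
    rintro _ ⟨l, rfl⟩ hn
    have hfin := InvSet_wordProd_finite l
    obtain ⟨d, hd, hdw⟩ :=
      exists_zdec_mem_iff (S := {x | (invFiber (wordProd l) (x + 1)).Nonempty})
        ((hfin.image fun p => p.2 - 1).subset fun x ⟨a, ha⟩ => ⟨(a, x + 1), ha, by simp⟩)
    obtain ⟨a, ha, hnil, hprod, hlen⟩ := ih (wordProd l * (wordProd d)⁻¹)
      ⟨l ++ d.reverse, by simp [wordProd_reverse]⟩
      (ncard_invFiber_mul_inv_wordProd_le hfin hd hdw hn)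
    refine ⟨Function.update a n d, fun k => ?_, fun k hk => ?_, ?_, ?_⟩
    · rcases eq_or_ne k n with rfl | hk
      · simpa using hd
      · simpa [hk] using ha k
    · simpa [show k ≠ n by omega] using hnil k (by omega)
    · simp [concatZ_update_self_succ, hprod]
    · rw [concatZ_update_self_succ, List.length_append, hlen]
      exact ncard_InvSet_mul_inv_wordProd_add_length hfin hd hdw

theorem RFZn_nonempty_of_codeOf_le {n : ℕ} {w : Equiv.Perm ℤ} (hw : w ∈ SZSet)
    (hcode : ∀ i, codeOf w⁻¹ i ≤ n) : (RFZn n w).Nonempty := by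
  obtain ⟨a, ha, hnil, hprod, hlen⟩ :=
    exists_zdec_factorization n w hw fun b => codeOf_inv_apply w b ▸ hcode (w b)
  exact ⟨a, ha, hnil, isReducedWord_of_length_eq hprod hlen⟩

/-! ### Marking inversions by primes -/

def primeWhere (m : ℕ → Bool) (l : List ℤ) : List PLetter := l.mapIdx fun i c => (c, m i)

lemma unprimeW_primeWhere (m : ℕ → Bool) (l : List ℤ) : unprimeW (primeWhere m l) = l := by
  apply List.ext_getElem <;> simp [unprimeW, primeWhere]

lemma PDec_primeWhere (m : ℕ → Bool) {l : List ℤ} (hl : ZDec l) : PDec (primeWhere m l) := by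
  rw [← unprimeW_primeWhere m l, ZDec, unprimeW, List.pairwise_map] at hl
  exact hl.imp fun {p q} hpq => by simp only [pval]; split_ifs <;> omega

lemma markedSet_primeWhere (m : ℕ → Bool) (l : List ℤ) :
    markedSet (primeWhere m l) = {p | ∃ j < l.length, m j = true ∧ p = invAt l j} := by
  have hlen : (primeWhere m l).length = l.length := List.length_mapIdx
  have hget (j : Fin (primeWhere m l).length) :
      (primeWhere m l).get j = (l.getD j 0, m j) := by
    rw [List.getD_eq_getElem _ _ (hlen ▸ j.2), List.get_eq_getElem]
    exact List.getElem_mapIdx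
  have hdrop (j : ℕ) :
      ((primeWhere m l).drop (j + 1)).reverse.map Prod.fst = (l.drop (j + 1)).reverse := by
    rw [List.map_reverse, List.map_drop, ← unprimeW, unprimeW_primeWhere]
  ext p
  simp only [markedSet, hget, hdrop, invAt, Set.mem_ofPred_eq]
  constructor
  · rintro ⟨⟨j, hj⟩, hm, h₁, h₂⟩
    exact ⟨j, hlen ▸ hj, hm, Prod.ext h₁ h₂⟩
  · rintro ⟨j, hj, hm, rfl⟩
    exact ⟨⟨j, hlen ▸ hj⟩, hm, rfl, rfl⟩

lemma concatP_primeWhere (m : ℕ → Bool) (a : ℕ → List ℤ) (n : ℕ) :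
    concatP (fun k => primeWhere (fun i => m (i + (concatZ a k).length)) (a k)) n =
      primeWhere m (concatZ a n) := by
  induction n with
  | zero => rfl
  | succ n ih =>
    rw [concatZ_succ, primeWhere, List.mapIdx_append, ← primeWhere, ← primeWhere, ← ih]
    simp [concatP, List.range_succ]

theorem RFplusN_nonempty_of_mem_RFZn {n : ℕ} {w : Equiv.Perm ℤ} {A : Set (ℤ × ℤ)}
    {a : ℕ → List ℤ} (ha : a ∈ RFZn n w) (hA : A ⊆ InvSet w) :
    (RFplusN n w A).Nonempty := by
  classical
  obtain ⟨hdec, hnil, hred⟩ := ha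
  set m : ℕ → Bool := fun j => decide (invAt (concatZ a n) j ∈ A)
  refine ⟨fun k => primeWhere (fun i => m (i + (concatZ a k).length)) (a k),
    fun k => PDec_primeWhere _ (hdec k), fun k hk => by simp [hnil k hk, primeWhere], ?_, ?_⟩
  · rw [IsPrimedReducedWord, concatP_primeWhere, unprimeW_primeWhere]
    exact hred
  · rw [concatP_primeWhere, markedSet_primeWhere]
    ext p
    refine ⟨fun ⟨j, _, hj, hp⟩ => hp ▸ of_decide_eq_true hj, fun hp => ?_⟩
    obtain ⟨j, hj, rfl⟩ :=
      InvSet_wordProd_subset_range_invAt (concatZ a n) (hred.1 ▸ hA hp)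
    exact ⟨j, hj, decide_eq_true hp, rfl⟩

theorem RFplusN_nonempty_iff_general (n : ℕ) (w : Equiv.Perm ℤ) (hw : w ∈ SZSet)
    (A : Set (ℤ × ℤ)) (hA : A ⊆ InvSet w) :
    (RFplusN n w A).Nonempty ↔ ∀ i : ℤ, codeOf w⁻¹ i ≤ n := by
  refine ⟨fun ⟨_, ha⟩ => codeOf_inv_le_of_mem_RFplusN ha, fun hcode => ?_⟩
  exact RFplusN_nonempty_of_mem_RFZn (RFZn_nonempty_of_codeOf_le hw hcode).some_mem hA

/-- For `w ∈ S_ℤ`, `A ⊆ Inv(w)` and `n ≥ 1`, the set `RF⁺_n(w, A)` is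
nonempty if and only if `c_i(w⁻¹) ≤ n` for every `i ∈ ℤ`. -/
theorem RFplusN_nonempty_iff (n : ℕ) (hn : 0 < n) (w : Equiv.Perm ℤ) (hw : w ∈ SZSet)
    (A : Set (ℤ × ℤ)) (hA : A ⊆ InvSet w) :
    (RFplusN n w A).Nonempty ↔ ∀ i : ℤ, codeOf w⁻¹ i ≤ n :=
  RFplusN_nonempty_iff_general n w hw A hA
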